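/- For each integer n ≥ 0 and parameter α, the higher-order Euler polynomial E_n^{(α)}(x) equals (−1)^n times the determinant of the (n+1)×(n+1) matrix whose first column has entries 1, x, x², ..., x^n, and whose (i,j)-entry for j ≥ 2 is C(i−1, j−2)·β_{i−j+1} if i ≥ j−1 and 0 otherwise, where β_m = Σ_{i=0}^{m} ⟨α⟩_i · S(m,i)/2^i. -/

import Mathlib

/-!
Write `u(t) = (eᵗ + 1)/2`. The generating function of `E_n^{(α)}(x)` is `u^{-α} e^{xt}`, and
`β_m` is the `m`-th derivative of `u^α` at `0`: since `u' = eᵗ/2` is its own derivative, each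
differentiation of `u^{c-i} (u')^i` produces the Stirling recurrence. Differentiating
`(u^{-α} e^{xt}) · u^α = e^{xt}` `m` times at `0` by the Leibniz rule gives
`∑_k C(m,k) E_k^{(α)}(x) β_{m-k} = x^m`, a lower unitriangular linear system in `E_0, …, E_n`.
Cramer's rule for the last unknown, with the right-hand side moved from the last column to the
first (a cyclic permutation of sign `(-1)^n`), yields the determinant.
-/

open Finset

/-- Stirling numbers of the second kind `S(n,k)`. -/
def stirling : ℕ → ℕ → ℕ
  | 0, 0 => 1
  | 0, _ + 1 => 0
  | _ + 1, 0 => 0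
  | n + 1, k + 1 => (k + 1) * stirling n (k + 1) + stirling n k

/-- The falling factorial `⟨x⟩_i = x (x-1) ⋯ (x-i+1)`, with `⟨x⟩_0 = 1`. -/
def fallingFac (x : ℝ) (i : ℕ) : ℝ := ∏ k ∈ Finset.range i, (x - k)

/-- The function `(e^t - 1)/t`, extended by the value `1` at `t = 0`. -/
noncomputable def expm1Div (t : ℝ) : ℝ := if t = 0 then 1 else (Real.exp t - 1) / t

/-- The higher-order Bernoulli polynomial `B_n^{(α)}(x)`, defined via the generating
function `(t/(eᵗ-1))^α e^{xt} = ∑ B_n^{(α)}(x) tⁿ/n!`, i.e. as the `n`-th derivative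
of `((eᵗ-1)/t)^{-α} e^{xt}` at `t = 0`. -/
noncomputable def higherBernoulli (n : ℕ) (α x : ℝ) : ℝ :=
  iteratedDeriv n (fun t => expm1Div t ^ (-α) * Real.exp (x * t)) 0

/-- The higher-order Euler polynomial `E_n^{(α)}(x)`, defined via the generating
function `(2/(eᵗ+1))^α e^{xt} = ∑ E_n^{(α)}(x) tⁿ/n!`. -/
noncomputable def higherEuler (n : ℕ) (α x : ℝ) : ℝ :=
  iteratedDeriv n (fun t => ((Real.exp t + 1) / 2) ^ (-α) * Real.exp (x * t)) 0

open Real Matrix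

lemma stirling_eq_stirlingSecond : stirling = Nat.stirlingSecond := by
  funext m k
  induction m generalizing k with
  | zero => cases k <;> rfl
  | succ m ih => cases k <;> simp [stirling, Nat.stirlingSecond, ih]

lemma fallingFac_succ (c : ℝ) (i : ℕ) : fallingFac c (i + 1) = fallingFac c i * (c - i) :=
  prod_range_succ _ i

lemma sum_fallingFac_stirling_succ (c : ℝ) (m : ℕ) (T : ℕ → ℝ) :
    ∑ i ∈ range (m + 1), fallingFac c i * stirling m i * ((c - i) * T (i + 1) + i * T i) =
      ∑ i ∈ range (m + 2), fallingFac c i * stirling (m + 1) i * T i := by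
  simp only [stirling_eq_stirlingSecond]
  have hshift : ∑ i ∈ range (m + 1), fallingFac c i * Nat.stirlingSecond m i * (i * T i) =
      ∑ i ∈ range (m + 1),
        fallingFac c (i + 1) * Nat.stirlingSecond m (i + 1) * ((i + 1 : ℕ) * T (i + 1)) := by
    rw [sum_range_succ', sum_range_succ, Nat.stirlingSecond_eq_zero_of_lt (Nat.lt_succ_self m)]
    simp
  simp only [mul_add, sum_add_distrib]
  rw [hshift, ← sum_add_distrib, sum_range_succ' _ (m + 1)]
  simp only [Nat.stirlingSecond_succ_succ, Nat.stirlingSecond_succ_zero, fallingFac_succ]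
  push_cast
  simp only [mul_zero, zero_mul, add_zero]
  exact sum_congr rfl fun i _ => by ring

noncomputable def eulerTerm (c : ℝ) (i : ℕ) (t : ℝ) : ℝ :=
  ((exp t + 1) / 2) ^ (c - i) * (exp t / 2) ^ i

lemma hasDerivAt_eulerTerm (c : ℝ) (i : ℕ) (t : ℝ) :
    HasDerivAt (eulerTerm c i) ((c - i) * eulerTerm c (i + 1) t + i * eulerTerm c i t) t := by
  have hw : HasDerivAt (fun t => exp t / 2) (exp t / 2) t := (hasDerivAt_exp t).div_const 2
  have hu : HasDerivAt (fun t => (exp t + 1) / 2) (exp t / 2) t :=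
    ((hasDerivAt_exp t).add_const 1).div_const 2
  have hpos : 0 < (exp t + 1) / 2 := by positivity
  refine ((hu.rpow_const (p := c - i) (Or.inl hpos.ne')).fun_mul (hw.fun_pow i)).congr_deriv ?_
  unfold eulerTerm
  push_cast
  rw [show c - (i + 1) = c - i - 1 by ring, Real.rpow_sub_one hpos.ne', pow_succ]
  rcases i with _ | i
  · simp only [CharP.cast_eq_zero, sub_zero, pow_zero, mul_one, zero_mul, add_zero]; ring
  · rw [Nat.add_sub_cancel, pow_succ]; field_simp

lemma iteratedDeriv_rpow_eq_sum (c : ℝ) (m : ℕ) :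
    iteratedDeriv m (fun t => ((exp t + 1) / 2) ^ c) =
      fun t => ∑ i ∈ range (m + 1), fallingFac c i * stirling m i * eulerTerm c i t := by
  induction m with
  | zero => funext t; simp [eulerTerm, fallingFac, stirling]
  | succ m ih =>
    funext t
    rw [iteratedDeriv_succ, ih, ← sum_fallingFac_stirling_succ]
    exact (HasDerivAt.fun_sum fun i _ => (hasDerivAt_eulerTerm c i t).const_mul _).deriv

noncomputable def eulerBeta (α : ℝ) (m : ℕ) : ℝ :=
  ∑ i ∈ range (m + 1), fallingFac α i * (stirling m i : ℝ) / 2 ^ i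

lemma iteratedDeriv_rpow_zero (c : ℝ) (m : ℕ) :
    iteratedDeriv m (fun t => ((exp t + 1) / 2) ^ c) 0 = eulerBeta c m := by
  rw [iteratedDeriv_rpow_eq_sum]
  refine sum_congr rfl fun i _ => ?_
  have h1 : (exp 0 + 1) / 2 = (1 : ℝ) := by norm_num
  rw [eulerTerm, h1, one_rpow, exp_zero, one_mul, div_pow, one_pow, mul_one_div]

lemma eulerBeta_zero (α : ℝ) : eulerBeta α 0 = 1 := by
  simp [eulerBeta, fallingFac, stirling]

lemma sum_choose_mul_higherEuler_mul_eulerBeta (α x : ℝ) (m : ℕ) :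
    ∑ k ∈ range (m + 1), (m.choose k : ℝ) * higherEuler k α x * eulerBeta α (m - k) =
      x ^ m := by
  have hu : ∀ c : ℝ, ContDiff ℝ m fun t => ((exp t + 1) / 2) ^ c := fun c =>
    ((contDiff_exp.add contDiff_const).div_const 2).rpow_const_of_ne fun t => by positivity
  have hE : ContDiff ℝ m fun t => ((exp t + 1) / 2) ^ (-α) * exp (x * t) :=
    (hu (-α)).mul (contDiff_exp.comp (contDiff_const.mul contDiff_id))
  have hprod : (fun t => ((exp t + 1) / 2) ^ (-α) * exp (x * t) * ((exp t + 1) / 2) ^ α) =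
      fun t => exp (x * t) := by
    funext t
    rw [mul_right_comm, ← Real.rpow_add (by positivity), neg_add_cancel, Real.rpow_zero, one_mul]
  have h := iteratedDeriv_fun_mul (x := 0) hE.contDiffAt (hu α).contDiffAt
  rw [hprod, iteratedDeriv_exp_const_mul] at h
  simp only [mul_zero, exp_zero, mul_one] at h
  simp only [h, iteratedDeriv_rpow_zero, higherEuler]

lemma Matrix.det_of_cons_mulVec_init {R : Type*} [CommRing R] {n : ℕ}
    (L : Matrix (Fin (n + 1)) (Fin (n + 1)) R) (v : Fin (n + 1) → R) :
    (of fun i => Fin.cons ((L *ᵥ v) i) (Fin.init (L i))).det =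
      (-1) ^ n * v (Fin.last n) * L.det := by
  set M := of fun i => Fin.cons ((L *ᵥ v) i) (Fin.init (L i))
  have hrot : M.submatrix id (finRotate (n + 1)) = L.updateCol (Fin.last n) (L *ᵥ v) := by
    ext i j
    induction j using Fin.lastCases with
    | last => simp [M]
    | cast k => simp [M, Fin.init, (Fin.castSucc_lt_last k).ne]
  have hcramer : (L.updateCol (Fin.last n) (L *ᵥ v)).det = v (Fin.last n) * L.det := by
    rw [← smul_eq_mul, ← L.det_updateCol_sum]
    congr
    ext k
    simp [mulVec, dotProduct, mul_comm]
  have hsign := det_permute' (finRotate (n + 1)) M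
  rw [hrot, hcramer, sign_finRotate, Nat.add_sub_cancel] at hsign
  have hsq : ((-1) ^ n : R) * (-1) ^ n = 1 := by rw [← mul_pow, neg_one_mul, neg_neg, one_pow]
  push_cast at hsign
  rw [mul_assoc, hsign, ← mul_assoc, hsq, one_mul]

noncomputable def eulerBetaMatrix (α : ℝ) (n : ℕ) : Matrix (Fin (n + 1)) (Fin (n + 1)) ℝ :=
  of fun i j => if j ≤ i then ((i : ℕ).choose j : ℝ) * eulerBeta α (i - j) else 0

lemma det_eulerBetaMatrix (α : ℝ) (n : ℕ) : (eulerBetaMatrix α n).det = 1 := by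
  have hlower : (eulerBetaMatrix α n).IsLowerTriangular := fun i j hij => if_neg (not_le.2 hij)
  rw [det_of_isLowerTriangular _ hlower]
  simp [eulerBetaMatrix, eulerBeta_zero]

lemma eulerBetaMatrix_mulVec_higherEuler (α x : ℝ) (n : ℕ) :
    eulerBetaMatrix α n *ᵥ (fun j : Fin (n + 1) => higherEuler j α x) =
      fun i : Fin (n + 1) => x ^ (i : ℕ) := by
  funext i
  rw [← sum_choose_mul_higherEuler_mul_eulerBeta α x i]
  simp only [mulVec, dotProduct, eulerBetaMatrix, of_apply, ite_mul, zero_mul, Fin.le_def]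
  rw [Fin.sum_univ_eq_sum_range (fun k => if k ≤ (i : ℕ) then
    ((i : ℕ).choose k : ℝ) * eulerBeta α (i - k) * higherEuler k α x else 0), ← sum_filter]
  have hfilter : {k ∈ range (n + 1) | k ≤ (i : ℕ)} = range (i + 1) := by
    ext k; simp only [mem_filter, mem_range]; omega
  exact hfilter ▸ sum_congr rfl fun k _ => by ring

/-- The determinantal expression for higher-order Euler polynomials. -/
theorem higherEuler_det (n : ℕ) (α x : ℝ) :
    higherEuler n α x =
      (-1 : ℝ) ^ n *
        (Matrix.of fun i j : Fin (n + 1) =>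
          if (j : ℕ) = 0 then x ^ (i : ℕ)
          else if (j : ℕ) ≤ (i : ℕ) + 1 then
            ((i : ℕ).choose ((j : ℕ) - 1) : ℝ) *
              (let m := (i : ℕ) + 1 - (j : ℕ)
               ∑ i' ∈ Finset.range (m + 1), fallingFac α i' * (stirling m i' : ℝ) / 2 ^ i')
          else 0).det := by
  have hdet : higherEuler n α x =
      (-1) ^ n * (of fun i : Fin (n + 1) =>
        Fin.cons (x ^ (i : ℕ)) (Fin.init (eulerBetaMatrix α n i))).det := by
    have h := det_of_cons_mulVec_init (eulerBetaMatrix α n) fun j => higherEuler j α x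
    rw [eulerBetaMatrix_mulVec_higherEuler, det_eulerBetaMatrix, mul_one] at h
    rw [h, ← mul_assoc, ← mul_pow, neg_one_mul, neg_neg, one_pow, one_mul, Fin.val_last]
  rw [hdet]
  congr 2
  ext i j
  induction j using Fin.cases with
  | zero => simp
  | succ k =>
    simp only [of_apply, Fin.cons_succ, Fin.init, eulerBetaMatrix, Fin.val_succ, Fin.val_castSucc,
      Nat.add_sub_cancel, Nat.add_sub_add_right, Nat.add_one_ne_zero, if_false, Fin.le_def,
      Nat.add_le_add_iff_right]
    rfl
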